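/- Every max-definable function is a ReLU encoder: let f : ℝ^{n×p} → ℝ^{r×p} be max-definable. Then there exist a finite t ∈ ℕ, multihead ReLU attention modules α_1,…,α_t, and one-layer ReLU feed-forward neural networks φ_1,…,φ_t (applied columnwise) such that f = φ_t ∘ α_t ∘ φ_{t−1} ∘ α_{t−1} ∘ ⋯ ∘ φ_1 ∘ α_1. -/
import Mathlib


noncomputable section

open Matrix

/-- The rectified linear unit. -/
def relu (x : ℝ) : ℝ := max x 0

/-- Entrywise ReLU of a matrix. -/
def matRelu {a b : ℕ} (M : Matrix (Fin a) (Fin b) ℝ) : Matrix (Fin a) (Fin b) ℝ :=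
  Matrix.of fun i j => relu (M i j)

/-- The ReLU-activated attention module `α(X) = (A_V X + B_V) · ReLU((A_K X + B_K)ᵀ (A_Q X + B_Q))`. -/
def attention {n p d m : ℕ}
    (AQ AK : Matrix (Fin d) (Fin n) ℝ) (AV : Matrix (Fin m) (Fin n) ℝ)
    (BQ BK : Matrix (Fin d) (Fin p) ℝ) (BV : Matrix (Fin m) (Fin p) ℝ)
    (X : Matrix (Fin n) (Fin p) ℝ) : Matrix (Fin m) (Fin p) ℝ :=
  (AV * X + BV) * matRelu ((AK * X + BK)ᵀ * (AQ * X + BQ))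

/-- An `h`-headed ReLU attention module: `h` attention modules stacked vertically, giving a map
`ℝ^{n×p} → ℝ^{hm×p}`. -/
def multiheadAttention {n p d m h : ℕ}
    (AQ AK : Fin h → Matrix (Fin d) (Fin n) ℝ) (AV : Fin h → Matrix (Fin m) (Fin n) ℝ)
    (BQ BK : Fin h → Matrix (Fin d) (Fin p) ℝ) (BV : Fin h → Matrix (Fin m) (Fin p) ℝ)
    (X : Matrix (Fin n) (Fin p) ℝ) : Matrix (Fin (h * m)) (Fin p) ℝ :=
  Matrix.of fun i j =>
    attention (AQ (finProdFinEquiv.symm i).1) (AK (finProdFinEquiv.symm i).1)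
      (AV (finProdFinEquiv.symm i).1) (BQ (finProdFinEquiv.symm i).1)
      (BK (finProdFinEquiv.symm i).1) (BV (finProdFinEquiv.symm i).1) X
      (finProdFinEquiv.symm i).2 j

/-- A one-layer ReLU feed-forward neural network `φ(x) = A₂ ReLU(A₁ x + b₁) + b₂`. -/
def oneLayerNN {a b c : ℕ} (A1 : Matrix (Fin b) (Fin a) ℝ) (b1 : Fin b → ℝ)
    (A2 : Matrix (Fin c) (Fin b) ℝ) (b2 : Fin c → ℝ) (x : Fin a → ℝ) : Fin c → ℝ :=
  A2.mulVec (fun i => relu (A1.mulVec x i + b1 i)) + b2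

/-- Apply a map `φ : ℝ^a → ℝ^c` columnwise to a matrix `X ∈ ℝ^{a×p}`. -/
def colwise {a c p : ℕ} (φ : (Fin a → ℝ) → (Fin c → ℝ))
    (X : Matrix (Fin a) (Fin p) ℝ) : Matrix (Fin c) (Fin p) ℝ :=
  Matrix.of fun i j => φ (fun r => X r j) i

/-- A function `g : ℝ^ι → ℝ` is max-definable if it is a finite max of finite mins of
polynomials. -/
def IsMaxDefinable (ι : Type) [Fintype ι] (g : (ι → ℝ) → ℝ) : Prop :=
  ∃ (m q : ℕ) (ξ : Fin (m + 1) → Fin (q + 1) → MvPolynomial ι ℝ),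
    ∀ x, g x = ⨆ i, ⨅ j, MvPolynomial.eval x (ξ i j)

/-- A matrix-valued function is max-definable if each coordinate function, as a function of the
entries of the input matrix, is max-definable. -/
def IsMatrixMaxDefinable {n p m q : ℕ}
    (f : Matrix (Fin n) (Fin p) ℝ → Matrix (Fin m) (Fin q) ℝ) : Prop :=
  ∀ (i : Fin m) (j : Fin q),
    IsMaxDefinable (Fin n × Fin p) (fun x => f (Matrix.of fun a b => x (a, b)) i j)

/-- An encoder block with one-layer feed-forward network: a multihead ReLU attention module
followed by a one-layer ReLU neural network applied columnwise. -/
def IsEncoderBlock1 {n r p : ℕ}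
    (f : Matrix (Fin n) (Fin p) ℝ → Matrix (Fin r) (Fin p) ℝ) : Prop :=
  ∃ (d m h w : ℕ)
    (AQ AK : Fin h → Matrix (Fin d) (Fin n) ℝ) (AV : Fin h → Matrix (Fin m) (Fin n) ℝ)
    (BQ BK : Fin h → Matrix (Fin d) (Fin p) ℝ) (BV : Fin h → Matrix (Fin m) (Fin p) ℝ)
    (A1 : Matrix (Fin w) (Fin (h * m)) ℝ) (c1 : Fin w → ℝ)
    (A2 : Matrix (Fin r) (Fin w) ℝ) (c2 : Fin r → ℝ),
    f = fun X => colwise (oneLayerNN A1 c1 A2 c2) (multiheadAttention AQ AK AV BQ BK BV X)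

/-- A `t`-layer encoder built of one-layer networks: the composition of `t` encoder blocks
`φ_t ∘ α_t ∘ ⋯ ∘ φ_1 ∘ α_1`. -/
inductive IsEncoder1 {p : ℕ} : ∀ {n r : ℕ}, ℕ →
    (Matrix (Fin n) (Fin p) ℝ → Matrix (Fin r) (Fin p) ℝ) → Prop
  | block {n r : ℕ} (f : Matrix (Fin n) (Fin p) ℝ → Matrix (Fin r) (Fin p) ℝ)
      (hf : IsEncoderBlock1 f) : IsEncoder1 1 f
  | comp {n s r : ℕ} (t : ℕ) (f : Matrix (Fin n) (Fin p) ℝ → Matrix (Fin s) (Fin p) ℝ)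
      (g : Matrix (Fin s) (Fin p) ℝ → Matrix (Fin r) (Fin p) ℝ)
      (hf : IsEncoderBlock1 f) (hg : IsEncoder1 t g) : IsEncoder1 (t + 1) (g ∘ f)

-- lemmas
lemma relu_sub (x : ℝ) : relu x - relu (-x) = x := by
  unfold relu
  rcases le_total x 0 with h | h
  · rw [max_eq_right h, max_eq_left (by linarith)]; ring
  · rw [max_eq_left h, max_eq_right (by linarith)]; ring

lemma matRelu_one {a : ℕ} : matRelu (1 : Matrix (Fin a) (Fin a) ℝ) = 1 := by
  ext i j
  by_cases h : i = j <;> simp [matRelu, Matrix.one_apply, relu, h]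

lemma oneLayerNN_apply {a b c : ℕ} (A1 : Matrix (Fin b) (Fin a) ℝ) (b1 : Fin b → ℝ)
    (A2 : Matrix (Fin c) (Fin b) ℝ) (b2 : Fin c → ℝ) (x : Fin a → ℝ) (i : Fin c) :
    oneLayerNN A1 b1 A2 b2 x i
      = (∑ t, A2 i t * relu ((∑ j, A1 t j * x j) + b1 t)) + b2 i := by
  simp [oneLayerNN, Matrix.mulVec, dotProduct]

lemma attention_apply {n p d m : ℕ}
    (AQ AK : Matrix (Fin d) (Fin n) ℝ) (AV : Matrix (Fin m) (Fin n) ℝ)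
    (BQ BK : Matrix (Fin d) (Fin p) ℝ) (BV : Matrix (Fin m) (Fin p) ℝ)
    (X : Matrix (Fin n) (Fin p) ℝ) (i : Fin m) (l : Fin p) :
    attention AQ AK AV BQ BK BV X i l
      = ∑ j, (AV * X + BV) i j
          * relu (∑ d', (AK * X + BK) d' j * (AQ * X + BQ) d' l) := by
  simp only [attention, Matrix.mul_apply, matRelu, Matrix.transpose_apply, Matrix.of_apply,
    Matrix.add_apply]

def NNable {q c : ℕ} (F : (Fin q → ℝ) → Fin c → ℝ) : Prop :=
  ∃ (w : ℕ) (A1 : Matrix (Fin w) (Fin q) ℝ) (b1 : Fin w → ℝ)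
    (A2 : Matrix (Fin c) (Fin w) ℝ) (b2 : Fin c → ℝ),
    ∀ y, oneLayerNN A1 b1 A2 b2 y = F y

lemma nnable_congr {q c : ℕ} {F G : (Fin q → ℝ) → Fin c → ℝ}
    (h : ∀ y i, F y i = G y i) : NNable F → NNable G := by
  rintro ⟨w, A1, b1, A2, b2, hw⟩
  exact ⟨w, A1, b1, A2, b2, fun y => (hw y).trans (funext fun i => h y i)⟩

lemma nnable_mk {q c : ℕ} (ι : Type) [Fintype ι] (P : ι → Fin q → ℝ) (d : ι → ℝ)
    (S : Fin c → ι → ℝ) (e : Fin c → ℝ) :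
    NNable (fun y i => (∑ t, S i t * relu ((∑ j, P t j * y j) + d t)) + e i) := by
  classical
  let eq := Fintype.equivFin ι
  refine ⟨Fintype.card ι, Matrix.of fun t j => P (eq.symm t) j, fun t => d (eq.symm t),
    Matrix.of fun i t => S i (eq.symm t), e, ?_⟩
  intro y
  funext i
  rw [oneLayerNN_apply]
  congr 1
  exact (Fintype.sum_equiv eq _ _ (fun t => by simp)).symm

lemma nnable_AR {q c : ℕ} (T : Fin c → Fin q → ℝ) (cst : Fin c → ℝ) (e : ℕ)
    (S : Fin c → Fin e → ℝ) (R : Fin e → Fin q → ℝ) (d : Fin e → ℝ) :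
    NNable (fun y i =>
      cst i + (∑ j, T i j * y j) + ∑ u, S i u * relu ((∑ j, R u j * y j) + d u)) := by
  classical
  have H := nnable_mk (ι := (Fin q ⊕ Fin q) ⊕ Fin e)
    (P := Sum.elim (Sum.elim (fun j0 j => if j = j0 then (1:ℝ) else 0)
      (fun j0 j => if j = j0 then (-1:ℝ) else 0)) R)
    (d := Sum.elim (fun _ => 0) d)
    (S := fun i => Sum.elim (Sum.elim (T i) (fun j0 => -T i j0)) (S i))
    (e := cst)
  refine nnable_congr ?_ H
  intro y i
  rw [Fintype.sum_sum_type, Fintype.sum_sum_type]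
  have h1 : ∀ j0 : Fin q, (∑ j, (if j = j0 then (1:ℝ) else 0) * y j) = y j0 := by
    intro j0
    simp [ite_mul]
  have h2 : ∀ j0 : Fin q, (∑ j, (if j = j0 then (-1:ℝ) else 0) * y j) = -y j0 := by
    intro j0
    simp [ite_mul]
  simp only [Sum.elim_inl, Sum.elim_inr, add_zero, h1, h2]
  have key : (∑ j0, T i j0 * relu (y j0)) + (∑ j0, -T i j0 * relu (-y j0))
      = ∑ j, T i j * y j := by
    rw [← Finset.sum_add_distrib]
    exact Finset.sum_congr rfl fun j _ => by
      linear_combination (T i j) * (relu_sub (y j))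
  rw [key]
  ring

-- ENCODER MACHINERY ---------------------------------------------------------

def Enc {p a b : ℕ} (f : Matrix (Fin a) (Fin p) ℝ → Matrix (Fin b) (Fin p) ℝ) : Prop :=
  ∃ t, IsEncoder1 t f

lemma enc_comp {p a b c : ℕ} {f : Matrix (Fin a) (Fin p) ℝ → Matrix (Fin b) (Fin p) ℝ}
    {g : Matrix (Fin b) (Fin p) ℝ → Matrix (Fin c) (Fin p) ℝ}
    (hf : Enc f) (hg : Enc g) : Enc (g ∘ f) := by
  obtain ⟨t, hf⟩ := hf
  induction hf generalizing c with
  | block f1 hf1 =>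
      obtain ⟨u, hg'⟩ := hg
      exact ⟨u + 1, IsEncoder1.comp u f1 g hf1 hg'⟩
  | comp t f1 g1 hf1 hg1 ih =>
      obtain ⟨u, h2⟩ := ih hg
      exact ⟨u + 1, IsEncoder1.comp u f1 (g ∘ g1) hf1 h2⟩

def pidx {h m : ℕ} (t : Fin h) (u : Fin m) : Fin (h * m) := finProdFinEquiv (t, u)

@[simp] lemma pidx_symm {h m : ℕ} (t : Fin h) (u : Fin m) :
    finProdFinEquiv.symm (pidx t u) = (t, u) := Equiv.symm_apply_apply _ _

lemma sum_pidx {h m : ℕ} (G : Fin (h * m) → ℝ) :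
    ∑ t, G t = ∑ a : Fin h, ∑ u : Fin m, G (pidx a u) := by
  rw [← Fintype.sum_equiv finProdFinEquiv (fun x : Fin h × Fin m => G (finProdFinEquiv x)) G
    (fun x => rfl), Fintype.sum_prod_type]
  rfl

lemma multihead_pidx {n p d m h : ℕ}
    (AQ AK : Fin h → Matrix (Fin d) (Fin n) ℝ) (AV : Fin h → Matrix (Fin m) (Fin n) ℝ)
    (BQ BK : Fin h → Matrix (Fin d) (Fin p) ℝ) (BV : Fin h → Matrix (Fin m) (Fin p) ℝ)
    (X : Matrix (Fin n) (Fin p) ℝ) (t : Fin h) (u : Fin m) (l : Fin p) :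
    multiheadAttention AQ AK AV BQ BK BV X (pidx t u) l
      = attention (AQ t) (AK t) (AV t) (BQ t) (BK t) (BV t) X u l := by
  simp only [multiheadAttention, Matrix.of_apply, pidx_symm]

lemma enc_block_of {p a c d m h : ℕ}
    (AQ AK : Fin h → Matrix (Fin d) (Fin a) ℝ) (AV : Fin h → Matrix (Fin m) (Fin a) ℝ)
    (BQ BK : Fin h → Matrix (Fin d) (Fin p) ℝ) (BV : Fin h → Matrix (Fin m) (Fin p) ℝ)
    (F : (Fin (h * m) → ℝ) → Fin c → ℝ) (hF : NNable F) :
    Enc (fun X : Matrix (Fin a) (Fin p) ℝ =>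
      Matrix.of fun i l => F (fun t => multiheadAttention AQ AK AV BQ BK BV X t l) i) := by
  obtain ⟨w, A1, b1, A2, b2, hw⟩ := hF
  refine ⟨1, IsEncoder1.block _ ⟨d, m, h, w, AQ, AK, AV, BQ, BK, BV, A1, b1, A2, b2, ?_⟩⟩
  funext X
  ext i l
  simp [colwise, hw]

lemma att_copy {p a : ℕ} (X : Matrix (Fin a) (Fin p) ℝ) :
    attention (0 : Matrix (Fin p) (Fin a) ℝ) 0 1 1 1 0 X = X := by
  simp [attention, matRelu_one]

lemma att_affine {p a m : ℕ} (AV : Matrix (Fin m) (Fin a) ℝ) (BV : Matrix (Fin m) (Fin p) ℝ)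
    (X : Matrix (Fin a) (Fin p) ℝ) :
    attention (0 : Matrix (Fin p) (Fin a) ℝ) 0 AV 1 1 BV X = AV * X + BV := by
  simp [attention, matRelu_one]

-- the state map: k value rows (constant along each row) plus p indicator rows
def sMap {n p k : ℕ} (s : Fin k → Matrix (Fin n) (Fin p) ℝ → ℝ)
    (X : Matrix (Fin n) (Fin p) ℝ) : Matrix (Fin (k + p)) (Fin p) ℝ :=
  Matrix.of fun i l =>
    Fin.addCases (fun a => s a X) (fun u => if u = l then (1:ℝ) else 0) i

@[simp] lemma sMap_left {n p k : ℕ} (s : Fin k → Matrix (Fin n) (Fin p) ℝ → ℝ) (X)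
    (a : Fin k) (l : Fin p) : sMap s X (Fin.castAdd p a) l = s a X := by
  simp [sMap]

@[simp] lemma sMap_right {n p k : ℕ} (s : Fin k → Matrix (Fin n) (Fin p) ℝ → ℝ) (X)
    (u : Fin p) (l : Fin p) : sMap s X (Fin.natAdd k u) l = if u = l then 1 else 0 := by
  simp [sMap]

def Good {n p k : ℕ} (s : Fin k → Matrix (Fin n) (Fin p) ℝ → ℝ) : Prop :=
  Enc (fun X => sMap s X)

lemma relu_ite (c : Prop) [Decidable c] : relu (if c then (1:ℝ) else 0) = if c then 1 else 0 := by
  split_ifs <;> simp [relu]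

lemma sum_sel {q : ℕ} (v : Fin q) (y : Fin q → ℝ) :
    ∑ j, (if j = v then (1:ℝ) else 0) * y j = y v := by simp [ite_mul]

lemma nnable_affine {q c : ℕ} (T : Fin c → Fin q → ℝ) (cst : Fin c → ℝ) :
    NNable (fun y i => cst i + ∑ j, T i j * y j) := by
  refine nnable_congr ?_ (nnable_AR T cst 0 (fun _ u => u.elim0) (fun u => u.elim0)
    (fun u => u.elim0))
  intro y i
  simp

lemma nnable_id {q : ℕ} : NNable (fun y : Fin q → ℝ => y) := by
  refine nnable_congr ?_ (nnable_affine (fun i j => if j = i then 1 else 0) 0)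
  intro y i
  simp [sum_sel]

lemma att_bcast {p n' : ℕ} (t : Fin p) (X : Matrix (Fin n') (Fin p) ℝ) :
    attention (0 : Matrix (Fin 1) (Fin n') ℝ) 0 1 (Matrix.of fun _ _ => (1:ℝ))
      (Matrix.of fun _ j => if j = t then 1 else 0) 0 X = Matrix.of fun u l => X u t := by
  ext u l
  rw [attention_apply]
  simp only [Matrix.one_mul, Matrix.zero_mul, zero_add, add_zero,
    Matrix.of_apply, Fin.sum_univ_one, mul_one]
  simp [relu_ite, mul_ite, Finset.sum_ite_eq']

def coords {n p : ℕ} : Fin (p * n) → Matrix (Fin n) (Fin p) ℝ → ℝ :=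
  fun i X => X (finProdFinEquiv.symm i).2 (finProdFinEquiv.symm i).1

lemma pidx_eta {h m : ℕ} (i : Fin (h * m)) :
    pidx (finProdFinEquiv.symm i).1 (finProdFinEquiv.symm i).2 = i := by
  unfold pidx
  rw [Prod.mk.eta]
  exact finProdFinEquiv.apply_symm_apply i

lemma good_base {n p : ℕ} : Good (coords (n := n) (p := p)) := by
  -- block 1 : broadcast all entries into every column
  have h1 : Enc (fun X : Matrix (Fin n) (Fin p) ℝ => Matrix.of fun i l => coords i X) := by
    have H := enc_block_of (p := p) (a := n) (c := p * n) (d := 1) (m := n) (h := p)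
      (fun _ => 0) (fun _ => 0) (fun _ => 1)
      (fun _ => Matrix.of fun _ _ => (1:ℝ))
      (fun t => Matrix.of fun _ j => if j = t then 1 else 0)
      (fun _ => 0) (fun y => y) nnable_id
    have heq : (fun X : Matrix (Fin n) (Fin p) ℝ =>
        Matrix.of fun i l =>
          multiheadAttention (d := 1) (m := n) (h := p) (fun _ => 0) (fun _ => 0) (fun _ => 1)
            (fun _ => Matrix.of fun _ _ => (1:ℝ))
            (fun t => Matrix.of fun _ j => if j = t then 1 else 0)
            (fun _ => 0) X i l)
        = fun X => Matrix.of fun i l => coords i X := by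
      funext X
      ext i l
      simp only [Matrix.of_apply]
      conv_lhs => rw [← pidx_eta i]
      rw [multihead_pidx, att_bcast]
      simp [coords]
    exact heq ▸ (H : Enc _)
  -- block 2 : append the indicator rows
  have h2 : Enc (fun Y : Matrix (Fin (p * n)) (Fin p) ℝ =>
      Matrix.of fun i l => (Fin.addCases (fun a => Y a l)
        (fun u : Fin p => if u = l then (1:ℝ) else 0) i : ℝ)) := by
    have H := enc_block_of (p := p) (a := p * n) (c := p * n + p) (d := p) (m := p * n + p)
      (h := 1) (fun _ => 0) (fun _ => 0)
      (fun _ => Matrix.of fun i c =>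
        Fin.addCases (fun a => if c = a then (1:ℝ) else 0) (fun _ => 0) i)
      (fun _ => 1) (fun _ => 1)
      (fun _ => Matrix.of fun i l =>
        Fin.addCases (fun _ => (0:ℝ)) (fun u : Fin p => if u = l then 1 else 0) i)
      (fun y i => y (pidx 0 i))
      (by
        refine nnable_congr ?_ (nnable_affine (fun i t => if t = pidx 0 i then 1 else 0) 0)
        intro y i
        simp [sum_sel])
    have heq : (fun Y : Matrix (Fin (p * n)) (Fin p) ℝ =>
        Matrix.of fun (i : Fin (p * n + p)) (l : Fin p) =>
          multiheadAttention (d := p) (m := p * n + p) (h := 1) (fun _ => 0) (fun _ => 0)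
            (fun _ => Matrix.of fun i c =>
              Fin.addCases (fun a => if c = a then (1:ℝ) else 0) (fun _ => 0) i)
            (fun _ => 1) (fun _ => 1)
            (fun _ => Matrix.of fun i l =>
              Fin.addCases (fun _ => (0:ℝ)) (fun u : Fin p => if u = l then 1 else 0) i)
            Y (pidx 0 i) l)
        = fun Y => Matrix.of fun i l => (Fin.addCases (fun a => Y a l)
            (fun u : Fin p => if u = l then (1:ℝ) else 0) i : ℝ) := by
      funext Y
      ext i l
      simp only [Matrix.of_apply]
      rw [multihead_pidx, att_affine]
      induction i using Fin.addCases with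
      | left a =>
          simp only [Matrix.add_apply, Matrix.mul_apply, Matrix.of_apply, Fin.addCases_left]
          simp [ite_mul, Finset.sum_ite_eq]
      | right u =>
          simp only [Matrix.add_apply, Matrix.mul_apply, Matrix.of_apply, Fin.addCases_right]
          simp
    exact heq ▸ (H : Enc _)
  have H := enc_comp h1 h2
  have heq : ((fun Y : Matrix (Fin (p * n)) (Fin p) ℝ =>
      Matrix.of fun i l => (Fin.addCases (fun a => Y a l)
        (fun u : Fin p => if u = l then (1:ℝ) else 0) i : ℝ))
      ∘ (fun X : Matrix (Fin n) (Fin p) ℝ => Matrix.of fun i l => coords i X))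
      = fun X => sMap coords X := by
    funext X
    ext i l
    induction i using Fin.addCases with
    | left a => simp [sMap, Function.comp, coords]
    | right u => simp [sMap, Function.comp]
  exact (heq ▸ H : Enc (fun X => sMap coords X))

lemma sum_pidx_one {m : ℕ} (G : Fin (1 * m) → ℝ) :
    ∑ t, G t = ∑ u : Fin m, G (pidx 0 u) := by
  rw [sum_pidx]
  simp

lemma sum_sel_neg {q : ℕ} (v : Fin q) (y : Fin q → ℝ) :
    ∑ j, (if j = v then (-1:ℝ) else 0) * y j = -y v := by simp [ite_mul]

lemma good_step {n p k k' : ℕ} {s : Fin k → Matrix (Fin n) (Fin p) ℝ → ℝ} (hs : Good s)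
    (F0 : (Fin k → ℝ) → Fin k' → ℝ) (hF0 : NNable F0) :
    Good (fun i X => F0 (fun j => s j X) i) := by
  classical
  obtain ⟨w, A1, b1, A2, b2, hw⟩ := hF0
  set Gb : (Fin (1 * (k + p)) → ℝ) → Fin (k' + p) → ℝ := fun y i =>
    Fin.addCases (fun i' => F0 (fun j => y (pidx 0 (Fin.castAdd p j))) i')
      (fun u => y (pidx 0 (Fin.natAdd k u))) i with hGb
  have hGnn : NNable Gb := by
    have hmk := nnable_mk (q := 1 * (k + p)) (c := k' + p) (ι := Fin w ⊕ (Fin p ⊕ Fin p))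
      (P := Sum.elim
        (fun t jh => Fin.addCases (motive := fun _ => ℝ) (A1 t) (fun _ => 0)
          ((finProdFinEquiv.symm jh).2))
        (Sum.elim (fun u jh => if jh = pidx 0 (Fin.natAdd k u) then 1 else 0)
          (fun u jh => if jh = pidx 0 (Fin.natAdd k u) then -1 else 0)))
      (d := Sum.elim b1 0)
      (S := fun i => Fin.addCases (motive := fun _ => (Fin w ⊕ (Fin p ⊕ Fin p)) → ℝ)
        (fun i' => Sum.elim (A2 i') 0)
        (fun u => Sum.elim 0 (Sum.elim (fun u' => if u' = u then 1 else 0)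
          (fun u' => if u' = u then -1 else 0))) i)
      (e := Fin.addCases b2 0)
    refine nnable_congr ?_ hmk
    intro y i
    rw [Fintype.sum_sum_type, Fintype.sum_sum_type]
    have hP1 : ∀ t : Fin w,
        (∑ jh, (Fin.addCases (motive := fun _ => ℝ) (A1 t) (fun _ => 0)
            ((finProdFinEquiv.symm jh).2)) * y jh)
          = ∑ j : Fin k, A1 t j * y (pidx 0 (Fin.castAdd p j)) := by
      intro t
      rw [sum_pidx_one (fun jh => (Fin.addCases (motive := fun _ => ℝ) (A1 t) (fun _ => 0)
        ((finProdFinEquiv.symm jh).2)) * y jh)]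
      simp only [pidx_symm]
      rw [Fin.sum_univ_add]
      simp
    simp only [Sum.elim_inl, Sum.elim_inr, hP1]
    induction i using Fin.addCases with
    | left i' =>
        simp only [Fin.addCases_left, Sum.elim_inl, Sum.elim_inr, Pi.zero_apply, zero_mul,
          Finset.sum_const_zero, add_zero, hGb]
        rw [← hw]
        rw [oneLayerNN_apply]
    | right u =>
        simp only [Fin.addCases_right, Sum.elim_inl, Sum.elim_inr, Pi.zero_apply, zero_mul,
          Finset.sum_const_zero, zero_add, add_zero, hGb]
        simp only [sum_sel, sum_sel_neg]
        have := relu_sub (y (pidx 0 (Fin.natAdd k u)))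
        linarith
  have H := enc_block_of (p := p) (a := k + p) (c := k' + p) (d := p) (m := k + p) (h := 1)
    (fun _ => 0) (fun _ => 0) (fun _ => 1) (fun _ => 1) (fun _ => 1) (fun _ => 0) Gb hGnn
  have H2 := enc_comp hs H
  have heq : ((fun X : Matrix (Fin (k + p)) (Fin p) ℝ =>
      Matrix.of fun i l => Gb (fun t => multiheadAttention (d := p) (m := k + p) (h := 1)
        (fun _ => 0) (fun _ => 0)
        (fun _ => 1) (fun _ => 1) (fun _ => 1) (fun _ => 0) X t l) i)
      ∘ (fun X => sMap s X))
      = fun X => sMap (fun i X => F0 (fun j => s j X) i) X := by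
    funext X
    ext i l
    simp only [Function.comp_apply, Matrix.of_apply, hGb]
    have hy : ∀ v : Fin (k + p),
        multiheadAttention (p := p) (d := p) (m := k + p) (h := 1) (fun _ => 0) (fun _ => 0)
          (fun _ => 1) (fun _ => 1) (fun _ => 1) (fun _ => 0) (sMap s X) (pidx 0 v) l
        = sMap s X v l := by
      intro v
      rw [multihead_pidx, att_copy]
    induction i using Fin.addCases with
    | left i' =>
        simp only [Fin.addCases_left, sMap_left, Matrix.of_apply]
        congr 1
        funext j
        rw [hy (Fin.castAdd p j)]
        simp
    | right u =>
        simp only [Fin.addCases_right, sMap_right, Matrix.of_apply]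
        rw [hy (Fin.natAdd k u)]
        simp
  exact (heq ▸ H2 : Enc (fun X => sMap (fun i X => F0 (fun j => s j X) i) X))

lemma max_relu (x y : ℝ) : y + relu (x - y) = max x y := by
  unfold relu
  rcases le_total x y with h | h
  · rw [max_eq_right (by linarith : x - y ≤ 0), max_eq_right h]; ring
  · rw [max_eq_left (by linarith : (0:ℝ) ≤ x - y), max_eq_left h]; ring

lemma min_relu (x y : ℝ) : y - relu (y - x) = min x y := by
  unfold relu
  rcases le_total x y with h | h
  · rw [max_eq_left (by linarith : (0:ℝ) ≤ y - x), min_eq_left h]; ring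
  · rw [max_eq_right (by linarith : y - x ≤ 0), min_eq_right h]; ring

lemma good_snoc_AR {n p k : ℕ} {s : Fin k → Matrix (Fin n) (Fin p) ℝ → ℝ} (hs : Good s)
    (T : Fin k → ℝ) (c0 : ℝ) (e : ℕ) (S : Fin e → ℝ) (R : Fin e → Fin k → ℝ) (d : Fin e → ℝ) :
    Good (Fin.snoc s (fun X =>
      c0 + (∑ j, T j * s j X) + ∑ u, S u * relu ((∑ j, R u j * s j X) + d u))) := by
  have hF : NNable (q := k) (c := k + 1) (fun y => Fin.snoc y
      (c0 + (∑ j, T j * y j) + ∑ u, S u * relu ((∑ j, R u j * y j) + d u))) := by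
    refine nnable_congr ?_ (nnable_AR
      (fun i => Fin.lastCases T (fun i' j => if j = i' then 1 else 0) i)
      (Fin.lastCases c0 (fun _ => 0)) e
      (fun i => Fin.lastCases S (fun _ _ => 0) i) R d)
    intro y i
    induction i using Fin.lastCases with
    | last => simp
    | cast i' => simp [sum_sel]
  have H := good_step hs _ hF
  have heq : (fun (i : Fin (k + 1)) (X : Matrix (Fin n) (Fin p) ℝ) =>
      (Fin.snoc (fun j => s j X)
        (c0 + (∑ j, T j * s j X) + ∑ u, S u * relu ((∑ j, R u j * s j X) + d u))
        : Fin (k + 1) → ℝ) i)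
      = Fin.snoc s (fun X =>
          c0 + (∑ j, T j * s j X) + ∑ u, S u * relu ((∑ j, R u j * s j X) + d u)) := by
    funext i X
    induction i using Fin.lastCases with
    | last => simp
    | cast i' => simp
  exact (heq ▸ (H : Good _) :
    Good (Fin.snoc s (fun X =>
      c0 + (∑ j, T j * s j X) + ∑ u, S u * relu ((∑ j, R u j * s j X) + d u))))

lemma good_snoc_copy {n p k : ℕ} {s : Fin k → Matrix (Fin n) (Fin p) ℝ → ℝ} (hs : Good s)
    (a : Fin k) : Good (Fin.snoc s (s a)) := by
  have H := good_snoc_AR hs (fun j => if j = a then 1 else 0) 0 0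
    (fun _ => 0) (fun _ _ => 0) (fun _ => 0)
  have harg : (fun X => (0:ℝ) + (∑ j, (if j = a then (1:ℝ) else 0) * s j X)
      + ∑ u : Fin 0, (0:ℝ) * relu ((∑ j, (0:ℝ) * s j X) + 0)) = s a := by
    funext X
    simp [sum_sel]
  rw [harg] at H
  exact H

lemma good_snoc_const {n p k : ℕ} {s : Fin k → Matrix (Fin n) (Fin p) ℝ → ℝ} (hs : Good s)
    (c : ℝ) : Good (Fin.snoc s (fun _ => c)) := by
  have H := good_snoc_AR hs (fun _ => 0) c 0 (fun _ => 0) (fun _ _ => 0) (fun _ => 0)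
  have harg : (fun X => c + (∑ j, (0:ℝ) * s j X)
      + ∑ u : Fin 0, (0:ℝ) * relu ((∑ j, (0:ℝ) * s j X) + 0)) = fun _ => c := by
    funext X
    simp
  rw [harg] at H
  exact H

lemma good_snoc_add2 {n p k : ℕ} {s : Fin k → Matrix (Fin n) (Fin p) ℝ → ℝ} (hs : Good s)
    (a b : Fin k) : Good (Fin.snoc s (fun X => s a X + s b X)) := by
  have H := good_snoc_AR hs (fun j => (if j = a then 1 else 0) + (if j = b then 1 else 0)) 0 0
    (fun _ => 0) (fun _ _ => 0) (fun _ => 0)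
  have harg : (fun X => (0:ℝ) + (∑ j, ((if j = a then (1:ℝ) else 0) + (if j = b then 1 else 0)) * s j X)
      + ∑ u : Fin 0, (0:ℝ) * relu ((∑ j, (0:ℝ) * s j X) + 0)) = fun X => s a X + s b X := by
    funext X
    simp [add_mul, Finset.sum_add_distrib, sum_sel]
  rw [harg] at H
  exact H

lemma good_snoc_max {n p k : ℕ} {s : Fin k → Matrix (Fin n) (Fin p) ℝ → ℝ} (hs : Good s)
    (a b : Fin k) : Good (Fin.snoc s (fun X => max (s a X) (s b X))) := by
  have H := good_snoc_AR hs (fun j => if j = b then 1 else 0) 0 1 (fun _ => 1)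
    (fun _ j => (if j = a then 1 else 0) - (if j = b then 1 else 0)) (fun _ => 0)
  have harg : (fun X => (0:ℝ) + (∑ j, (if j = b then (1:ℝ) else 0) * s j X)
      + ∑ _u : Fin 1, (1:ℝ) * relu ((∑ j, ((if j = a then (1:ℝ) else 0) - (if j = b then 1 else 0)) * s j X) + 0))
      = fun X => max (s a X) (s b X) := by
    funext X
    simp only [zero_add, add_zero, Fin.sum_univ_one, one_mul, sub_mul,
      Finset.sum_sub_distrib, sum_sel]
    exact max_relu _ _
  rw [harg] at H
  exact H

lemma good_snoc_min {n p k : ℕ} {s : Fin k → Matrix (Fin n) (Fin p) ℝ → ℝ} (hs : Good s)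
    (a b : Fin k) : Good (Fin.snoc s (fun X => min (s a X) (s b X))) := by
  have H := good_snoc_AR hs (fun j => if j = b then 1 else 0) 0 1 (fun _ => -1)
    (fun _ j => (if j = b then 1 else 0) - (if j = a then 1 else 0)) (fun _ => 0)
  have harg : (fun X => (0:ℝ) + (∑ j, (if j = b then (1:ℝ) else 0) * s j X)
      + ∑ _u : Fin 1, (-1:ℝ) * relu ((∑ j, ((if j = b then (1:ℝ) else 0) - (if j = a then 1 else 0)) * s j X) + 0))
      = fun X => min (s a X) (s b X) := by
    funext X
    simp only [zero_add, add_zero, Fin.sum_univ_one, neg_one_mul, sub_mul,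
      Finset.sum_sub_distrib, sum_sel]
    rw [← min_relu (s a X) (s b X)]
    ring
  rw [harg] at H
  exact H

lemma att_prod {p k' : ℕ} (z0 : Fin p) (r0 va vb : Fin k') (ε : ℝ)
    (Y : Matrix (Fin k') (Fin p) ℝ) (i : Fin k') (l : Fin p) :
    attention
      (Matrix.of fun d' c => (if d' = z0 then (1:ℝ) else 0) * (if c = vb then 1 else 0))
      (Matrix.of fun d' c => (if d' = z0 then ε else 0) * (if c = va then 1 else 0))
      0 0 0
      (Matrix.of fun i' j => (if i' = r0 then (1:ℝ) else 0) * (if j = z0 then 1 else 0))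
      Y i l
    = (if i = r0 then 1 else 0) * relu (ε * Y va z0 * Y vb l) := by
  rw [attention_apply]
  have hK : ∀ (d' : Fin p) (j : Fin p),
      (((Matrix.of fun d' c => (if d' = z0 then ε else 0) * (if c = va then 1 else 0))
          : Matrix (Fin p) (Fin k') ℝ) * Y + (0 : Matrix (Fin p) (Fin p) ℝ))
        d' j = (if d' = z0 then ε else 0) * Y va j := by
    intro d' j
    simp [Matrix.mul_apply, mul_assoc, ite_mul, mul_ite, Finset.sum_ite_eq']
  have hQ : ∀ (d' : Fin p) (j : Fin p),
      (((Matrix.of fun d' c => (if d' = z0 then (1:ℝ) else 0) * (if c = vb then 1 else 0))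
          : Matrix (Fin p) (Fin k') ℝ) * Y + (0 : Matrix (Fin p) (Fin p) ℝ))
        d' j = (if d' = z0 then (1:ℝ) else 0) * Y vb j := by
    intro d' j
    simp [Matrix.mul_apply, mul_assoc, ite_mul, mul_ite, Finset.sum_ite_eq']
  have hrelu : ∀ j : Fin p,
      (∑ d', (((Matrix.of fun d' c => (if d' = z0 then ε else 0) * (if c = va then 1 else 0))
          : Matrix (Fin p) (Fin k') ℝ) * Y + (0 : Matrix (Fin p) (Fin p) ℝ)) d' j
        * (((Matrix.of fun d' c => (if d' = z0 then (1:ℝ) else 0) * (if c = vb then 1 else 0))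
          : Matrix (Fin p) (Fin k') ℝ) * Y + (0 : Matrix (Fin p) (Fin p) ℝ)) d' l)
      = ε * Y va j * Y vb l := by
    intro j
    rw [Finset.sum_congr rfl fun d' _ => by rw [hK, hQ]]
    simp [ite_mul, mul_ite, Finset.sum_ite_eq', mul_assoc]
  rw [Finset.sum_congr rfl fun j _ => by rw [hrelu]]
  simp only [Matrix.zero_mul, zero_add, Matrix.of_apply, mul_ite, mul_one, mul_zero, ite_mul,
    one_mul, zero_mul]
  rw [Finset.sum_ite_eq' Finset.univ z0
    (fun x => if i = r0 then relu (ε * Y va x * Y vb l) else 0)]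
  simp

lemma good_snoc_mul {n p k : ℕ} (hp : 0 < p) {s : Fin k → Matrix (Fin n) (Fin p) ℝ → ℝ}
    (hs : Good s) (a b : Fin k) : Good (Fin.snoc s (fun X => s a X * s b X)) := by
  classical
  set z0 : Fin p := ⟨0, hp⟩ with hz0
  set r0 : Fin (k + p) := Fin.natAdd k z0 with hr0
  set sg : Fin 3 → ℝ := ![0, 1, -1] with hsg
  -- head matrices
  set AQm : Fin 3 → Matrix (Fin p) (Fin (k + p)) ℝ := fun τ => if τ = 0 then 0 else
    Matrix.of fun d' c => (if d' = z0 then (1:ℝ) else 0) * (if c = Fin.castAdd p b then 1 else 0)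
    with hAQm
  set AKm : Fin 3 → Matrix (Fin p) (Fin (k + p)) ℝ := fun τ => if τ = 0 then 0 else
    Matrix.of fun d' c => (if d' = z0 then sg τ else 0) * (if c = Fin.castAdd p a then 1 else 0)
    with hAKm
  set AVm : Fin 3 → Matrix (Fin (k + p)) (Fin (k + p)) ℝ := fun τ => if τ = 0 then 1 else 0
    with hAVm
  set BQm : Fin 3 → Matrix (Fin p) (Fin p) ℝ := fun τ => if τ = 0 then 1 else 0 with hBQm
  set BVm : Fin 3 → Matrix (Fin (k + p)) (Fin p) ℝ := fun τ => if τ = 0 then 0 else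
    Matrix.of fun i' j => (if i' = r0 then (1:ℝ) else 0) * (if j = z0 then 1 else 0) with hBVm
  set F : (Fin (3 * (k + p)) → ℝ) → Fin (k + 1 + p) → ℝ := fun y =>
    Fin.addCases
      (fun i' => Fin.lastCases (y (pidx 1 r0) - y (pidx 2 r0))
        (fun j => y (pidx 0 (Fin.castAdd p j))) i')
      (fun u => y (pidx 0 (Fin.natAdd k u))) with hF
  have hFnn : NNable F := by
    refine nnable_congr ?_ (nnable_affine (fun i => Fin.addCases
      (fun i' => Fin.lastCases
        (fun t => (if t = pidx 1 r0 then (1:ℝ) else 0) - (if t = pidx 2 r0 then 1 else 0))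
        (fun j t => if t = pidx 0 (Fin.castAdd p j) then (1:ℝ) else 0) i')
      (fun u t => if t = pidx 0 (Fin.natAdd k u) then (1:ℝ) else 0) i) 0)
    intro y i
    induction i using Fin.addCases with
    | left i' =>
        induction i' using Fin.lastCases with
        | last => simp [hF, sub_mul, Finset.sum_sub_distrib, sum_sel]
        | cast j => simp [hF, sum_sel]
    | right u => simp [hF, sum_sel]
  have H := enc_block_of (p := p) (a := k + p) (c := k + 1 + p) (d := p) (m := k + p) (h := 3)
    AQm AKm AVm BQm BQm BVm F hFnn
  have H2 := enc_comp hs H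
  have heq : ((fun X : Matrix (Fin (k + p)) (Fin p) ℝ =>
      Matrix.of fun i l => F (fun t => multiheadAttention AQm AKm AVm BQm BQm BVm X t l) i)
      ∘ (fun X => sMap s X))
      = fun X => sMap (Fin.snoc s (fun X => s a X * s b X)) X := by
    funext X
    ext i l
    simp only [Function.comp_apply, Matrix.of_apply, hF]
    have hv0 : ∀ v : Fin (k + p),
        multiheadAttention AQm AKm AVm BQm BQm BVm (sMap s X) (pidx 0 v) l = sMap s X v l := by
      intro v
      rw [multihead_pidx]
      simp only [hAQm, hAKm, hAVm, hBQm, hBVm, if_pos rfl]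
      rw [att_copy]
    have hv1 : multiheadAttention AQm AKm AVm BQm BQm BVm (sMap s X) (pidx 1 r0) l
        = relu (s a X * s b X) := by
      rw [multihead_pidx]
      simp only [hAQm, hAKm, hAVm, hBQm, hBVm]
      rw [if_neg (by decide), if_neg (by decide), if_neg (by decide), if_neg (by decide),
        if_neg (by decide)]
      rw [att_prod z0 r0 (Fin.castAdd p a) (Fin.castAdd p b) (sg 1) (sMap s X) r0 l]
      simp [hsg]
    have hv2 : multiheadAttention AQm AKm AVm BQm BQm BVm (sMap s X) (pidx 2 r0) l
        = relu (-(s a X * s b X)) := by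
      rw [multihead_pidx]
      simp only [hAQm, hAKm, hAVm, hBQm, hBVm]
      rw [if_neg (by decide), if_neg (by decide), if_neg (by decide), if_neg (by decide),
        if_neg (by decide)]
      rw [att_prod z0 r0 (Fin.castAdd p a) (Fin.castAdd p b) (sg 2) (sMap s X) r0 l]
      simp [hsg]
    induction i using Fin.addCases with
    | left i' =>
        induction i' using Fin.lastCases with
        | last =>
            simp only [Fin.addCases_left, Fin.lastCases_last, hv1, hv2, sMap_left,
              Fin.snoc_last]
            have := relu_sub (s a X * s b X)
            linarith
        | cast j =>
            simp only [Fin.addCases_left, Fin.lastCases_castSucc, hv0, sMap_left,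
              Fin.snoc_castSucc]
    | right u =>
        simp only [Fin.addCases_right, hv0, sMap_right]
  exact (heq ▸ H2 : Enc (fun X => sMap (Fin.snoc s (fun X => s a X * s b X)) X))

lemma att_sel {n p k : ℕ} (z0 : Fin p) (va : Fin p → Fin k) (ε : ℝ)
    (s : Fin k → Matrix (Fin n) (Fin p) ℝ → ℝ) (X : Matrix (Fin n) (Fin p) ℝ) (l : Fin p) :
    attention
      (Matrix.of fun j' c => if c = Fin.natAdd k j' then (1:ℝ) else 0)
      (Matrix.of fun j' c => ε * (if c = Fin.castAdd p (va j') then 1 else 0))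
      (0 : Matrix (Fin 1) (Fin (k + p)) ℝ) 0 0
      (Matrix.of fun _ j => if j = z0 then (1:ℝ) else 0)
      (sMap s X) (0 : Fin 1) l
    = relu (ε * s (va l) X) := by
  rw [attention_apply]
  have hK : ∀ (j' : Fin p) (j : Fin p),
      (((Matrix.of fun j' c => ε * (if c = Fin.castAdd p (va j') then 1 else 0))
          : Matrix (Fin p) (Fin (k + p)) ℝ) * sMap s X
        + (0 : Matrix (Fin p) (Fin p) ℝ)) j' j = ε * s (va j') X := by
    intro j' j
    simp [Matrix.mul_apply, mul_assoc, ite_mul, mul_ite, Finset.sum_ite_eq']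
  have hQ : ∀ (j' : Fin p) (j : Fin p),
      (((Matrix.of fun j' c => if c = Fin.natAdd k j' then (1:ℝ) else 0)
          : Matrix (Fin p) (Fin (k + p)) ℝ) * sMap s X
        + (0 : Matrix (Fin p) (Fin p) ℝ)) j' j = if j' = j then 1 else 0 := by
    intro j' j
    simp [Matrix.mul_apply, ite_mul, Finset.sum_ite_eq']
  have hrelu : ∀ j : Fin p,
      (∑ j', (((Matrix.of fun j' c => ε * (if c = Fin.castAdd p (va j') then 1 else 0))
          : Matrix (Fin p) (Fin (k + p)) ℝ) * sMap s X + (0 : Matrix (Fin p) (Fin p) ℝ)) j' j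
        * (((Matrix.of fun j' c => if c = Fin.natAdd k j' then (1:ℝ) else 0)
          : Matrix (Fin p) (Fin (k + p)) ℝ) * sMap s X + (0 : Matrix (Fin p) (Fin p) ℝ)) j' l)
      = ε * s (va l) X := by
    intro j
    rw [Finset.sum_congr rfl fun j' _ => by rw [hK, hQ]]
    simp [mul_ite, Finset.sum_ite_eq]
  rw [Finset.sum_congr rfl fun j _ => by rw [hrelu]]
  simp only [Matrix.zero_mul, zero_add, Matrix.of_apply, ite_mul, one_mul, zero_mul]
  rw [Finset.sum_ite_eq' Finset.univ z0 (fun _ => relu (ε * s (va l) X))]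
  simp

lemma good_select {n p k r : ℕ} (hp : 0 < p) {s : Fin k → Matrix (Fin n) (Fin p) ℝ → ℝ}
    (hs : Good s) (G : Fin r → Fin p → Fin k) :
    Enc (fun X : Matrix (Fin n) (Fin p) ℝ => Matrix.of fun i l => s (G i l) X) := by
  classical
  set z0 : Fin p := ⟨0, hp⟩ with hz0
  set sg : Fin 2 → ℝ := ![1, -1] with hsg
  set AQm : Fin (2 * r) → Matrix (Fin p) (Fin (k + p)) ℝ := fun _ =>
    Matrix.of fun j' c => if c = Fin.natAdd k j' then (1:ℝ) else 0 with hAQm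
  set AKm : Fin (2 * r) → Matrix (Fin p) (Fin (k + p)) ℝ := fun τ =>
    Matrix.of fun j' c => sg (finProdFinEquiv.symm τ).1
      * (if c = Fin.castAdd p (G (finProdFinEquiv.symm τ).2 j') then 1 else 0) with hAKm
  set AVm : Fin (2 * r) → Matrix (Fin 1) (Fin (k + p)) ℝ := fun _ => 0 with hAVm
  set BQm : Fin (2 * r) → Matrix (Fin p) (Fin p) ℝ := fun _ => 0 with hBQm
  set BVm : Fin (2 * r) → Matrix (Fin 1) (Fin p) ℝ := fun _ =>
    Matrix.of fun _ j => if j = z0 then (1:ℝ) else 0 with hBVm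
  set F : (Fin (2 * r * 1) → ℝ) → Fin r → ℝ := fun y i =>
    y (pidx (finProdFinEquiv ((0 : Fin 2), i)) 0) - y (pidx (finProdFinEquiv ((1 : Fin 2), i)) 0)
    with hF
  have hFnn : NNable F := by
    refine nnable_congr ?_ (nnable_affine (fun i t =>
      (if t = pidx (finProdFinEquiv ((0 : Fin 2), i)) 0 then (1:ℝ) else 0)
      - (if t = pidx (finProdFinEquiv ((1 : Fin 2), i)) 0 then 1 else 0)) 0)
    intro y i
    simp [hF, sub_mul, Finset.sum_sub_distrib, sum_sel]
  have H := enc_block_of (p := p) (a := k + p) (c := r) (d := p) (m := 1) (h := 2 * r)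
    AQm AKm AVm BQm BQm BVm F hFnn
  have H2 := enc_comp hs H
  have heq : ((fun X : Matrix (Fin (k + p)) (Fin p) ℝ =>
      Matrix.of fun i l => F (fun t => multiheadAttention AQm AKm AVm BQm BQm BVm X t l) i)
      ∘ (fun X => sMap s X))
      = fun X => Matrix.of fun i l => s (G i l) X := by
    funext X
    ext i l
    simp only [Function.comp_apply, Matrix.of_apply, hF]
    have hv : ∀ (σ : Fin 2) (i : Fin r),
        multiheadAttention AQm AKm AVm BQm BQm BVm (sMap s X)
          (pidx (finProdFinEquiv (σ, i)) 0) l = relu (sg σ * s (G i l) X) := by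
      intro σ i
      rw [multihead_pidx]
      simp only [hAQm, hAKm, hAVm, hBQm, hBVm, Equiv.symm_apply_apply]
      exact att_sel z0 (G i) (sg σ) s X l
    rw [hv 0 i, hv 1 i]
    have h0 : sg 0 = 1 := rfl
    have h1 : sg 1 = -1 := rfl
    rw [h0, h1, one_mul, neg_one_mul]
    exact relu_sub (s (G i l) X)
  exact (heq ▸ H2 : Enc (fun X : Matrix (Fin n) (Fin p) ℝ => Matrix.of fun i l => s (G i l) X))

inductive MM {n p : ℕ} : (Matrix (Fin n) (Fin p) ℝ → ℝ) → Prop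
  | coord (a : Fin n) (b : Fin p) : MM (fun X => X a b)
  | const (c : ℝ) : MM (fun _ => c)
  | add {f g} : MM f → MM g → MM (fun X => f X + g X)
  | mul {f g} : MM f → MM g → MM (fun X => f X * g X)
  | max {f g} : MM f → MM g → MM (fun X => max (f X) (g X))
  | min {f g} : MM f → MM g → MM (fun X => min (f X) (g X))

lemma real_iSup_succ {m : ℕ} (f : Fin (m + 2) → ℝ) :
    (⨆ i, f i) = max (⨆ i : Fin (m + 1), f i.castSucc) (f (Fin.last (m + 1))) := by
  apply le_antisymm
  · refine ciSup_le fun i => ?_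
    induction i using Fin.lastCases with
    | last => exact le_max_right _ _
    | cast j =>
        exact le_trans
          (le_ciSup (f := fun i : Fin (m + 1) => f i.castSucc) (Set.finite_range _).bddAbove j)
          (le_max_left _ _)
  · exact max_le (ciSup_le fun i => le_ciSup (Set.finite_range f).bddAbove i.castSucc)
      (le_ciSup (Set.finite_range f).bddAbove (Fin.last _))

lemma real_iInf_succ {m : ℕ} (f : Fin (m + 2) → ℝ) :
    (⨅ i, f i) = min (⨅ i : Fin (m + 1), f i.castSucc) (f (Fin.last (m + 1))) := by
  apply le_antisymm
  · exact le_min (le_ciInf fun j => ciInf_le (Set.finite_range f).bddBelow j.castSucc)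
      (ciInf_le (Set.finite_range f).bddBelow (Fin.last _))
  · refine le_ciInf fun i => ?_
    induction i using Fin.lastCases with
    | last => exact min_le_right _ _
    | cast j =>
        exact le_trans (min_le_left _ _)
          (ciInf_le (f := fun i : Fin (m + 1) => f i.castSucc) (Set.finite_range _).bddBelow j)

lemma mm_iSup {n p m : ℕ} (f : Fin (m + 1) → Matrix (Fin n) (Fin p) ℝ → ℝ)
    (h : ∀ i, MM (f i)) : MM (fun X => ⨆ i, f i X) := by
  induction m with
  | zero =>
      have he : (fun X => ⨆ i, f i X) = f 0 :=
        funext fun X => by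
          simpa using ciSup_unique (ι := Fin 1) (s := fun i => f i X)
      rw [he]; exact h 0
  | succ m ih =>
      have he : (fun X => ⨆ i, f i X)
          = fun X => max (⨆ i : Fin (m + 1), f i.castSucc X) (f (Fin.last _) X) :=
        funext fun X => real_iSup_succ _
      rw [he]
      exact MM.max (ih _ fun i => h _) (h _)

lemma mm_iInf {n p m : ℕ} (f : Fin (m + 1) → Matrix (Fin n) (Fin p) ℝ → ℝ)
    (h : ∀ i, MM (f i)) : MM (fun X => ⨅ i, f i X) := by
  induction m with
  | zero =>
      have he : (fun X => ⨅ i, f i X) = f 0 :=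
        funext fun X => by
          simpa using ciInf_unique (ι := Fin 1) (s := fun i => f i X)
      rw [he]; exact h 0
  | succ m ih =>
      have he : (fun X => ⨅ i, f i X)
          = fun X => min (⨅ i : Fin (m + 1), f i.castSucc X) (f (Fin.last _) X) :=
        funext fun X => real_iInf_succ _
      rw [he]
      exact MM.min (ih _ fun i => h _) (h _)

lemma mm_eval {n p : ℕ} (P : MvPolynomial (Fin n × Fin p) ℝ) :
    MM (fun X : Matrix (Fin n) (Fin p) ℝ => MvPolynomial.eval (fun q : Fin n × Fin p => X q.1 q.2) P) := by
  induction P using MvPolynomial.induction_on with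
  | C a =>
      have he : (fun X : Matrix (Fin n) (Fin p) ℝ =>
          MvPolynomial.eval (fun q : Fin n × Fin p => X q.1 q.2) (MvPolynomial.C a)) = fun _ => a :=
        funext fun X => MvPolynomial.eval_C a
      rw [he]; exact MM.const a
  | add P1 P2 h1 h2 =>
      have he : (fun X : Matrix (Fin n) (Fin p) ℝ =>
          MvPolynomial.eval (fun q : Fin n × Fin p => X q.1 q.2) (P1 + P2))
          = fun X => MvPolynomial.eval (fun q : Fin n × Fin p => X q.1 q.2) P1
            + MvPolynomial.eval (fun q : Fin n × Fin p => X q.1 q.2) P2 :=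
        funext fun X => by simp
      rw [he]; exact MM.add h1 h2
  | mul_X P1 i h1 =>
      have he : (fun X : Matrix (Fin n) (Fin p) ℝ =>
          MvPolynomial.eval (fun q : Fin n × Fin p => X q.1 q.2) (P1 * MvPolynomial.X i))
          = fun X => MvPolynomial.eval (fun q : Fin n × Fin p => X q.1 q.2) P1 * X i.1 i.2 :=
        funext fun X => by simp
      rw [he]; exact MM.mul h1 (MM.coord i.1 i.2)

def GoodC {n p k : ℕ} (s : Fin k → Matrix (Fin n) (Fin p) ℝ → ℝ) : Prop :=
  Good s ∧ ∃ cpos : Fin n → Fin p → Fin k, ∀ a b, s (cpos a b) = fun X => X a b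

lemma goodC_base {n p : ℕ} : GoodC (coords (n := n) (p := p)) := by
  refine ⟨good_base, fun a b => finProdFinEquiv (b, a), fun a b => ?_⟩
  funext X
  simp [coords]

lemma goodC_snoc {n p k : ℕ} {s : Fin k → Matrix (Fin n) (Fin p) ℝ → ℝ} (hc : GoodC s)
    {g : Matrix (Fin n) (Fin p) ℝ → ℝ} (hg : Good (Fin.snoc s g)) : GoodC (Fin.snoc s g) := by
  obtain ⟨cpos, hcpos⟩ := hc.2
  exact ⟨hg, fun a b => (cpos a b).castSucc, fun a b => by
    rw [Fin.snoc_castSucc]; exact hcpos a b⟩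

lemma mm_extend {n p : ℕ} (hp : 0 < p) {g : Matrix (Fin n) (Fin p) ℝ → ℝ} (hg : MM g) :
    ∀ {k : ℕ} (s : Fin k → Matrix (Fin n) (Fin p) ℝ → ℝ), GoodC s →
    ∃ (k' : ℕ) (s' : Fin k' → Matrix (Fin n) (Fin p) ℝ → ℝ) (ρ : Fin k → Fin k') (j' : Fin k'),
      GoodC s' ∧ (∀ i, s' (ρ i) = s i) ∧ s' j' = g := by
  induction hg with
  | coord a b =>
      intro k s hs
      obtain ⟨cpos, hcpos⟩ := hs.2
      refine ⟨k + 1, Fin.snoc s (s (cpos a b)), Fin.castSucc, Fin.last k,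
        goodC_snoc hs (good_snoc_copy hs.1 (cpos a b)), fun i => Fin.snoc_castSucc .., ?_⟩
      rw [Fin.snoc_last]
      exact hcpos a b
  | const c =>
      intro k s hs
      exact ⟨k + 1, Fin.snoc s (fun _ => c), Fin.castSucc, Fin.last k,
        goodC_snoc hs (good_snoc_const hs.1 c), fun i => Fin.snoc_castSucc ..,
        Fin.snoc_last ..⟩
  | @add f g hf hg ihf ihg =>
      intro k s hs
      obtain ⟨k1, s1, ρ1, j1, hs1, hρ1, hj1⟩ := ihf s hs
      obtain ⟨k2, s2, ρ2, j2, hs2, hρ2, hj2⟩ := ihg s1 hs1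
      have harg : (fun X => s2 (ρ2 j1) X + s2 j2 X) = fun X => f X + g X := by
        funext X
        rw [hρ2 j1, hj1, hj2]
      have hG : Good (Fin.snoc s2 (fun X => f X + g X)) := by
        have := good_snoc_add2 hs2.1 (ρ2 j1) j2
        rwa [harg] at this
      exact ⟨k2 + 1, Fin.snoc s2 (fun X => f X + g X),
        fun i => (ρ2 (ρ1 i)).castSucc, Fin.last k2, goodC_snoc hs2 hG,
        fun i => by rw [Fin.snoc_castSucc, hρ2, hρ1], Fin.snoc_last ..⟩
  | @mul f g hf hg ihf ihg =>
      intro k s hs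
      obtain ⟨k1, s1, ρ1, j1, hs1, hρ1, hj1⟩ := ihf s hs
      obtain ⟨k2, s2, ρ2, j2, hs2, hρ2, hj2⟩ := ihg s1 hs1
      have harg : (fun X => s2 (ρ2 j1) X * s2 j2 X) = fun X => f X * g X := by
        funext X
        rw [hρ2 j1, hj1, hj2]
      have hG : Good (Fin.snoc s2 (fun X => f X * g X)) := by
        have := good_snoc_mul hp hs2.1 (ρ2 j1) j2
        rwa [harg] at this
      exact ⟨k2 + 1, Fin.snoc s2 (fun X => f X * g X),
        fun i => (ρ2 (ρ1 i)).castSucc, Fin.last k2, goodC_snoc hs2 hG,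
        fun i => by rw [Fin.snoc_castSucc, hρ2, hρ1], Fin.snoc_last ..⟩
  | @max f g hf hg ihf ihg =>
      intro k s hs
      obtain ⟨k1, s1, ρ1, j1, hs1, hρ1, hj1⟩ := ihf s hs
      obtain ⟨k2, s2, ρ2, j2, hs2, hρ2, hj2⟩ := ihg s1 hs1
      have harg : (fun X => max (s2 (ρ2 j1) X) (s2 j2 X)) = fun X => max (f X) (g X) := by
        funext X
        rw [hρ2 j1, hj1, hj2]
      have hG : Good (Fin.snoc s2 (fun X => max (f X) (g X))) := by
        have := good_snoc_max hs2.1 (ρ2 j1) j2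
        rwa [harg] at this
      exact ⟨k2 + 1, Fin.snoc s2 (fun X => max (f X) (g X)),
        fun i => (ρ2 (ρ1 i)).castSucc, Fin.last k2, goodC_snoc hs2 hG,
        fun i => by rw [Fin.snoc_castSucc, hρ2, hρ1], Fin.snoc_last ..⟩
  | @min f g hf hg ihf ihg =>
      intro k s hs
      obtain ⟨k1, s1, ρ1, j1, hs1, hρ1, hj1⟩ := ihf s hs
      obtain ⟨k2, s2, ρ2, j2, hs2, hρ2, hj2⟩ := ihg s1 hs1
      have harg : (fun X => min (s2 (ρ2 j1) X) (s2 j2 X)) = fun X => min (f X) (g X) := by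
        funext X
        rw [hρ2 j1, hj1, hj2]
      have hG : Good (Fin.snoc s2 (fun X => min (f X) (g X))) := by
        have := good_snoc_min hs2.1 (ρ2 j1) j2
        rwa [harg] at this
      exact ⟨k2 + 1, Fin.snoc s2 (fun X => min (f X) (g X)),
        fun i => (ρ2 (ρ1 i)).castSucc, Fin.last k2, goodC_snoc hs2 hG,
        fun i => by rw [Fin.snoc_castSucc, hρ2, hρ1], Fin.snoc_last ..⟩

lemma exists_good_family {n p : ℕ} (hp : 0 < p) (q : ℕ)
    (fam : Fin q → Matrix (Fin n) (Fin p) ℝ → ℝ) (hfam : ∀ t, MM (fam t)) :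
    ∃ (k : ℕ) (s : Fin k → Matrix (Fin n) (Fin p) ℝ → ℝ) (pos : Fin q → Fin k),
      GoodC s ∧ ∀ t, s (pos t) = fam t := by
  induction q with
  | zero => exact ⟨p * n, coords, Fin.elim0, goodC_base, fun t => t.elim0⟩
  | succ q ih =>
      obtain ⟨k, s, pos, hs, hpos⟩ := ih (fun t => fam t.castSucc) (fun t => hfam _)
      obtain ⟨k', s', ρ, j', hs', hρ, hj'⟩ := mm_extend hp (hfam (Fin.last q)) s hs
      refine ⟨k', s', fun t => Fin.lastCases j' (fun t' => ρ (pos t')) t, hs', fun t => ?_⟩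
      induction t using Fin.lastCases with
      | last => simpa using hj'
      | cast t' =>
          simp only [Fin.lastCases_castSucc]
          rw [hρ]
          exact hpos t'

lemma mm_of {n p r : ℕ} {f : Matrix (Fin n) (Fin p) ℝ → Matrix (Fin r) (Fin p) ℝ}
    (hf : IsMatrixMaxDefinable f) (i : Fin r) (l : Fin p) : MM (fun X => f X i l) := by
  obtain ⟨m, q, ξ, h⟩ := hf i l
  have heq : (fun X : Matrix (Fin n) (Fin p) ℝ => f X i l)
      = fun X => ⨆ i', ⨅ j', MvPolynomial.eval
        (fun ab : Fin n × Fin p => X ab.1 ab.2) (ξ i' j') := by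
    funext X
    exact h (fun ab => X ab.1 ab.2)
  rw [heq]
  exact mm_iSup _ fun i' => mm_iInf _ fun j' => mm_eval _


/-- Every max-definable function `f : ℝ^{n×p} → ℝ^{r×p}` is a ReLU encoder: for some finite `t`
there are multihead ReLU attention modules `α_1, …, α_t` and one-layer ReLU feed-forward neural
networks `φ_1, …, φ_t` (applied columnwise) with `f = φ_t ∘ α_t ∘ ⋯ ∘ φ_1 ∘ α_1`. -/
theorem maxDefinable_is_encoder (n p r : ℕ)
    (f : Matrix (Fin n) (Fin p) ℝ → Matrix (Fin r) (Fin p) ℝ)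
    (hf : IsMatrixMaxDefinable f) :
    ∃ t : ℕ, IsEncoder1 t f := by
  rcases Nat.eq_zero_or_pos p with hp0 | hp
  · subst hp0
    refine ⟨1, IsEncoder1.block f ⟨0, 0, 0, 0, (fun t => t.elim0), (fun t => t.elim0),
      (fun t => t.elim0), (fun t => t.elim0), (fun t => t.elim0), (fun t => t.elim0),
      0, 0, 0, 0, ?_⟩⟩
    funext X
    ext i j
    exact j.elim0
  · have hmm : ∀ t : Fin (r * p), MM (fun X => f X (finProdFinEquiv.symm t).1
        (finProdFinEquiv.symm t).2) := fun t => mm_of hf _ _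
    obtain ⟨k, s, pos, hs, hpos⟩ := exists_good_family hp (r * p)
      (fun t X => f X (finProdFinEquiv.symm t).1 (finProdFinEquiv.symm t).2) hmm
    have H := good_select hp hs.1 (fun i l => pos (finProdFinEquiv (i, l)))
    have heq : (fun X : Matrix (Fin n) (Fin p) ℝ =>
        Matrix.of fun i l => s (pos (finProdFinEquiv (i, l))) X) = f := by
      funext X
      ext i l
      simp only [Matrix.of_apply]
      rw [hpos (finProdFinEquiv (i, l))]
      simp
    exact (heq ▸ H : Enc f)
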